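/- For a strict ∞-category C, let C_k be the sub-∞-category of arrows of dimension at most k. Then the natural map ℤ(C_k) → ℤC induced by inclusion is injective with image exactly (ℤC)_k, the subgroup of k-arrows of the ∞-group ℤC (i.e. the image of π_k^+). -/

import Mathlib

/-- Street's one-sorted axioms for a strict ∞-category. -/
def IsOmegaCat {C : Type*} (π : Bool → ℕ → C → C) (comp : ℕ → C → C → C) : Prop :=
  (∀ x, ∃ n, π true n x = x ∧ π false n x = x) ∧
  (∀ (ε δ : Bool) (n m : ℕ) (x : C),
      π ε n (π δ m x) = if n < m then π ε n x else π δ m x) ∧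
  (∀ (n : ℕ) (x : C), comp n (π false n x) x = x ∧ comp n x (π true n x) = x) ∧
  (∀ (n : ℕ) (x y : C), π true n x = π false n y →
      π false n (comp n x y) = π false n x ∧
      π true n (comp n x y) = π true n y ∧
      ∀ (k : ℕ), n < k → ∀ ε, π ε k (comp n x y) = comp n (π ε k x) (π ε k y)) ∧
  (∀ (n : ℕ) (x y z : C), π true n x = π false n y → π true n y = π false n z →
      comp n x (comp n y z) = comp n (comp n x y) z) ∧
  (∀ (k n : ℕ) (x y z w : C), k < n →
      π true n x = π false n y → π true n z = π false n w →
      π true k (comp n x y) = π false k (comp n z w) →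
      comp k (comp n x y) (comp n z w) = comp n (comp k x z) (comp k y w))

/-- `(Z, πZ, δ)` is the free strict ∞-group on the strict ∞-category `(C, π, comp)`. -/
def IsFreeInfGroup {C : Type*} (π : Bool → ℕ → C → C) (comp : ℕ → C → C → C)
    {Z : Type*} [AddCommGroup Z] (πZ : Bool → ℕ → Z →+ Z) (δ : C → Z) : Prop :=
  (∀ (ε δ' : Bool) (n m : ℕ) (z : Z),
      πZ ε n (πZ δ' m z) = if n < m then πZ ε n z else πZ δ' m z) ∧
  (∀ z : Z, ∃ n, πZ true n z = z) ∧
  (∀ (ε : Bool) (n : ℕ) (f : C), δ (π ε n f) = πZ ε n (δ f)) ∧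
  (∀ (k : ℕ) (x y : C), π true k x = π false k y →
      δ (comp k x y) = δ x + δ y - δ (π true k x)) ∧
  (∀ (H : Type) [AddCommGroup H] (πH : Bool → ℕ → H →+ H),
    (∀ (ε δ' : Bool) (n m : ℕ) (z : H),
        πH ε n (πH δ' m z) = if n < m then πH ε n z else πH δ' m z) →
    (∀ z : H, ∃ n, πH true n z = z) →
    ∀ φ : C → H,
      (∀ (ε : Bool) (n : ℕ) (f : C), φ (π ε n f) = πH ε n (φ f)) →
      (∀ (k : ℕ) (x y : C), π true k x = π false k y →
          φ (comp k x y) = φ x + φ y - πH true k (φ x)) →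
      ∃! ψ : Z →+ H, (∀ c : C, ψ (δ c) = φ c) ∧
        ∀ (ε : Bool) (n : ℕ) (z : Z), ψ (πZ ε n z) = πH ε n (ψ z))

/-!
As a bare abelian group, `ℤC` is presented by the generators `δ c` and the relations
`δ (x #ₙ y) = δ x + δ y - δ (π⁺ₙ x)`: the quotient of the free abelian group on `C` by these
relations carries the ∞-group structure induced by `π`, so the universal property of `ℤC` maps
`ℤC` to it, generator to generator. Hence any `φ : C → H` satisfying the relations induces a
homomorphism out of `ℤC`, with no compatibility with `π` required. Applied to `c ↦ δ (π⁺ₖ c)` in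
`ℤ(C_k)` this gives the retraction `P⁺ₖ` of `ℤ(C_k) → ℤC`, whence injectivity. The image is
`(ℤC)_k` because both groups are generated by the `δ c`, and `π⁺ₖ (δ c) = δ (π⁺ₖ c)` lies in it.
-/

namespace IsOmegaCat

variable {C : Type*} {π : Bool → ℕ → C → C} {comp : ℕ → C → C → C}

theorem proj_proj_of_lt (hC : IsOmegaCat π comp) {ε ε' : Bool} {n m : ℕ} (x : C) (h : n < m) :
    π ε n (π ε' m x) = π ε n x := by
  rw [hC.2.1, if_pos h]

theorem proj_proj_of_le (hC : IsOmegaCat π comp) {ε ε' : Bool} {n m : ℕ} (x : C) (h : m ≤ n) :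
    π ε n (π ε' m x) = π ε' m x := by
  rw [hC.2.1, if_neg h.not_gt]

theorem src_comp (hC : IsOmegaCat π comp) {n : ℕ} {x y : C} (h : π true n x = π false n y) :
    π false n (comp n x y) = π false n x :=
  (hC.2.2.2.1 n x y h).1

theorem tgt_comp (hC : IsOmegaCat π comp) {n : ℕ} {x y : C} (h : π true n x = π false n y) :
    π true n (comp n x y) = π true n y :=
  (hC.2.2.2.1 n x y h).2.1

theorem proj_comp_of_gt (hC : IsOmegaCat π comp) {n N : ℕ} {x y : C}
    (h : π true n x = π false n y) (hN : n < N) (ε : Bool) :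
    π ε N (comp n x y) = comp n (π ε N x) (π ε N y) :=
  (hC.2.2.2.1 n x y h).2.2 N hN ε

theorem proj_comp_of_lt (hC : IsOmegaCat π comp) {n N : ℕ} {x y : C}
    (h : π true n x = π false n y) (hN : N < n) (ε : Bool) :
    π ε N (comp n x y) = π ε N x := by
  rw [← hC.proj_proj_of_lt (ε' := false) _ hN, hC.src_comp h, hC.proj_proj_of_lt _ hN]

theorem proj_right_of_lt (hC : IsOmegaCat π comp) {n N : ℕ} {x y : C}
    (h : π true n x = π false n y) (hN : N < n) (ε : Bool) :
    π ε N y = π ε N x := by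
  rw [← hC.proj_proj_of_lt (ε' := false) y hN, ← h, hC.proj_proj_of_lt _ hN]

end IsOmegaCat

section Presentation

variable {C : Type*} (π : Bool → ℕ → C → C) (comp : ℕ → C → C → C)

def RespectsComp {H : Type*} [AddCommGroup H] (φ : C → H) : Prop :=
  ∀ n x y, π true n x = π false n y → φ (comp n x y) = φ x + φ y - φ (π true n x)

variable {π comp}

theorem RespectsComp.comp_proj (hC : IsOmegaCat π comp) {H : Type*} [AddCommGroup H]
    {φ : C → H} (hφ : RespectsComp π comp φ) (ε : Bool) (n : ℕ) :
    RespectsComp π comp (fun c => φ (π ε n c)) := by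
  intro m x y hxy
  beta_reduce
  rcases lt_trichotomy n m with hnm | rfl | hmn
  · rw [hC.proj_comp_of_lt hxy hnm, hC.proj_right_of_lt hxy hnm, hC.proj_proj_of_lt _ hnm]
    abel
  · cases ε
    · rw [hC.src_comp hxy, hC.proj_proj_of_le _ le_rfl, ← hxy]
      abel
    · rw [hC.tgt_comp hxy, hC.proj_proj_of_le _ le_rfl]
      abel
  · have hb : π true m (π ε n x) = π false m (π ε n y) := by
      rw [hC.proj_proj_of_lt _ hmn, hC.proj_proj_of_lt _ hmn, hxy]
    rw [hC.proj_comp_of_gt hxy hmn, hφ _ _ _ hb, hC.proj_proj_of_lt _ hmn,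
      hC.proj_proj_of_le _ hmn.le]

variable (π comp)

def compRelations : AddSubgroup (FreeAbelianGroup C) :=
  AddSubgroup.closure {r | ∃ n x y, π true n x = π false n y ∧
    r = .of (comp n x y) - .of x - .of y + .of (π true n x)}

abbrev CompPresentation := FreeAbelianGroup C ⧸ compRelations π comp

namespace CompPresentation

def gen (c : C) : CompPresentation π comp := QuotientAddGroup.mk (FreeAbelianGroup.of c)

variable {π comp} {H : Type*} [AddCommGroup H]

def lift (φ : C → H) (hφ : RespectsComp π comp φ) : CompPresentation π comp →+ H :=
  QuotientAddGroup.lift _ (FreeAbelianGroup.lift φ) <| (AddSubgroup.closure_le _).mpr <| by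
    rintro _ ⟨n, x, y, hxy, rfl⟩
    simp only [SetLike.mem_coe, AddMonoidHom.mem_ker, map_add, map_sub,
      FreeAbelianGroup.lift_apply_of, hφ n x y hxy]
    abel

@[simp]
theorem lift_gen (φ : C → H) (hφ : RespectsComp π comp φ) (c : C) :
    lift φ hφ (gen π comp c) = φ c :=
  FreeAbelianGroup.lift_apply_of φ c

theorem hom_ext {f g : CompPresentation π comp →+ H}
    (h : ∀ c, f (gen π comp c) = g (gen π comp c)) : f = g :=
  QuotientAddGroup.addMonoidHom_ext _ (FreeAbelianGroup.lift_ext _ _ h)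

theorem gen_respectsComp : RespectsComp π comp (gen π comp) := by
  intro n x y hxy
  have h0 : (QuotientAddGroup.mk (.of (comp n x y) - .of x - .of y + .of (π true n x)) :
      CompPresentation π comp) = 0 :=
    (QuotientAddGroup.eq_zero_iff _).mpr (AddSubgroup.subset_closure ⟨n, x, y, hxy, rfl⟩)
  simp only [QuotientAddGroup.mk_add, QuotientAddGroup.mk_sub] at h0
  rw [← sub_eq_zero, ← h0, gen, gen, gen, gen]
  abel

def proj (hC : IsOmegaCat π comp) (ε : Bool) (n : ℕ) :
    CompPresentation π comp →+ CompPresentation π comp :=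
  lift _ (gen_respectsComp.comp_proj hC ε n)

@[simp]
theorem proj_gen (hC : IsOmegaCat π comp) (ε : Bool) (n : ℕ) (c : C) :
    proj hC ε n (gen π comp c) = gen π comp (π ε n c) :=
  lift_gen _ _ c

theorem proj_proj (hC : IsOmegaCat π comp) (ε ε' : Bool) (n m : ℕ) (z : CompPresentation π comp) :
    proj hC ε n (proj hC ε' m z) = if n < m then proj hC ε n z else proj hC ε' m z := by
  split_ifs with h
  · exact DFunLike.congr_fun (hom_ext (f := (proj hC ε n).comp (proj hC ε' m))
      fun c => by simp [hC.proj_proj_of_lt c h]) z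
  · exact DFunLike.congr_fun (hom_ext (f := (proj hC ε n).comp (proj hC ε' m))
      fun c => by simp [hC.proj_proj_of_le c (not_lt.mp h)]) z

theorem exists_proj_eq_self (hC : IsOmegaCat π comp) (z : CompPresentation π comp) :
    ∃ n, proj hC true n z = z := by
  suffices ∃ n, ∀ m, n ≤ m → proj hC true m z = z from this.imp fun n hn => hn n le_rfl
  obtain ⟨a, rfl⟩ := QuotientAddGroup.mk_surjective z
  induction a using FreeAbelianGroup.induction_on with
  | zero => exact ⟨0, fun m _ => map_zero _⟩
  | of c =>
    obtain ⟨n, hn, -⟩ := hC.1 c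
    refine ⟨n, fun m hm => ?_⟩
    change proj hC true m (gen π comp c) = gen π comp c
    rw [proj_gen, ← hn, hC.proj_proj_of_le _ hm]
  | neg a ih =>
    obtain ⟨n, hn⟩ := ih
    exact ⟨n, fun m hm => by rw [QuotientAddGroup.mk_neg, map_neg, hn m hm]⟩
  | add a b iha ihb =>
    obtain ⟨na, ha⟩ := iha
    obtain ⟨nb, hb⟩ := ihb
    exact ⟨max na nb, fun m hm => by
      rw [QuotientAddGroup.mk_add, map_add, ha m (le_of_max_le_left hm),
        hb m (le_of_max_le_right hm)]⟩

end CompPresentation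

end Presentation

namespace IsFreeInfGroup

variable {C : Type} {π : Bool → ℕ → C → C} {comp : ℕ → C → C → C}
  {Z : Type} [AddCommGroup Z] {πZ : Bool → ℕ → Z →+ Z} {δ : C → Z}

theorem map_proj (hZ : IsFreeInfGroup π comp πZ δ) (ε : Bool) (n : ℕ) (c : C) :
    δ (π ε n c) = πZ ε n (δ c) :=
  hZ.2.2.1 ε n c

theorem respectsComp (hZ : IsFreeInfGroup π comp πZ δ) : RespectsComp π comp δ :=
  hZ.2.2.2.1

theorem closure_range_eq_top (hZ : IsFreeInfGroup π comp πZ δ) :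
    AddSubgroup.closure (Set.range δ) = ⊤ := by
  -- The subgroup `S` generated by the `δ c` is a sub-∞-group through which `δ` factors; by
  -- uniqueness in the universal property, the factorization followed by `S ↪ Z` is the identity.
  obtain ⟨hππ, htrunc, hδπ, hcomp, huniv⟩ := hZ
  set S := AddSubgroup.closure (Set.range δ)
  have hδS : ∀ c, δ c ∈ S := fun c => AddSubgroup.subset_closure ⟨c, rfl⟩
  have hπS : ∀ ε n, S ≤ S.comap (πZ ε n) := fun ε n =>
    (AddSubgroup.closure_le _).mpr <| by rintro _ ⟨c, rfl⟩; simpa [← hδπ] using hδS _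
  let πS : Bool → ℕ → S →+ S := fun ε n =>
    ((πZ ε n).comp S.subtype).codRestrict S fun z => hπS ε n z.2
  have hπS_coe : ∀ ε n (z : S), (πS ε n z : Z) = πZ ε n z := fun _ _ _ => rfl
  obtain ⟨ψ, ⟨hψδ, hψπ⟩, -⟩ := huniv S πS
    (fun ε ε' n m z => by split_ifs with h <;> ext <;> simp [hπS_coe, hππ, h])
    (fun z => (htrunc z).imp fun n hn => Subtype.ext hn)
    (fun c => ⟨δ c, hδS c⟩) (fun ε n c => Subtype.ext (hδπ ε n c))
    (fun n x y h => Subtype.ext <| by simp [hπS_coe, hcomp n x y h, hδπ])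
  obtain ⟨_, -, huniq⟩ := huniv Z πZ hππ htrunc δ hδπ fun n x y h => by rw [hcomp n x y h, hδπ]
  have hψ : S.subtype.comp ψ = AddMonoidHom.id Z :=
    (huniq _ ⟨fun c => by simp [hψδ], fun ε n z => by simp [hψπ, hπS_coe]⟩).trans
      (huniq _ ⟨fun _ => rfl, fun _ _ _ => rfl⟩).symm
  refine eq_top_iff.mpr fun z _ => ?_
  rw [← AddMonoidHom.id_apply Z z, ← hψ]
  exact (ψ z).2

theorem hom_ext (hZ : IsFreeInfGroup π comp πZ δ) {H : Type*} [AddMonoid H] {f g : Z →+ H}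
    (h : ∀ c, f (δ c) = g (δ c)) : f = g :=
  AddMonoidHom.eq_of_eqOn_dense hZ.closure_range_eq_top (by rintro _ ⟨c, rfl⟩; exact h c)

theorem exists_lift (hC : IsOmegaCat π comp) (hZ : IsFreeInfGroup π comp πZ δ)
    {H : Type*} [AddCommGroup H] (φ : C → H) (hφ : RespectsComp π comp φ) :
    ∃ f : Z →+ H, ∀ c, f (δ c) = φ c := by
  open CompPresentation in
  obtain ⟨ψ, ⟨hψ, -⟩, -⟩ := hZ.2.2.2.2 (CompPresentation π comp) (proj hC) (proj_proj hC)
    (exists_proj_eq_self hC) (gen π comp) (fun ε n c => (proj_gen hC ε n c).symm)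
    (fun n x y h => by rw [gen_respectsComp n x y h, proj_gen])
  exact ⟨(lift φ hφ).comp ψ, fun c => by simp [hψ]⟩

end IsFreeInfGroup

theorem RespectsComp.comp_truncation {C Ck : Type*} {π : Bool → ℕ → C → C}
    {comp : ℕ → C → C → C} (hC : IsOmegaCat π comp) {πk : Bool → ℕ → Ck → Ck}
    {compk : ℕ → Ck → Ck → Ck} {j : Ck → C} (hjinj : Function.Injective j)
    (hjπ : ∀ (ε : Bool) (n : ℕ) (x : Ck), j (πk ε n x) = π ε n (j x))
    (hjcomp : ∀ (m : ℕ) (x y : Ck), πk true m x = πk false m y →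
      j (compk m x y) = comp m (j x) (j y))
    {H : Type*} [AddCommGroup H] {φ : Ck → H} (hφ : RespectsComp πk compk φ)
    {k : ℕ} {t : C → Ck} (ht : ∀ c, j (t c) = π true k c) :
    RespectsComp π comp (fun c => φ (t c)) := by
  have ht_eq : ∀ {a b}, π true k a = π true k b → t a = t b := fun h =>
    hjinj (by rw [ht, ht, h])
  intro n x y hxy
  beta_reduce
  rcases lt_trichotomy n k with hnk | rfl | hkn
  · have hb : πk true n (t x) = πk false n (t y) := hjinj <| by
      rw [hjπ, hjπ, ht, ht, hC.proj_proj_of_lt _ hnk, hC.proj_proj_of_lt _ hnk, hxy]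
    have hcomp : t (comp n x y) = compk n (t x) (t y) := hjinj <| by
      rw [ht, hC.proj_comp_of_gt hxy hnk, hjcomp _ _ _ hb, ht, ht]
    have hsrc : t (π true n x) = πk true n (t x) := hjinj <| by
      rw [ht, hjπ, ht, hC.proj_proj_of_le _ hnk.le, hC.proj_proj_of_lt _ hnk]
    rw [hcomp, hsrc]
    exact hφ _ _ _ hb
  · rw [ht_eq (hC.tgt_comp hxy), ht_eq (hC.proj_proj_of_le x le_rfl)]
    abel
  · rw [ht_eq (hC.proj_comp_of_lt hxy hkn true), ht_eq (hC.proj_right_of_lt hxy hkn true),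
      ht_eq (hC.proj_proj_of_lt x hkn)]
    abel

theorem free_inf_group_of_truncation_general
    {C Ck : Type} (π : Bool → ℕ → C → C) (comp : ℕ → C → C → C)
    (hcat : IsOmegaCat π comp)
    (πk : Bool → ℕ → Ck → Ck) (compk : ℕ → Ck → Ck → Ck)
    (k : ℕ) (j : Ck → C)
    (hjinj : Function.Injective j)
    (hjπ : ∀ (ε : Bool) (n : ℕ) (x : Ck), j (πk ε n x) = π ε n (j x))
    (hjcomp : ∀ (m : ℕ) (x y : Ck), πk true m x = πk false m y →
      j (compk m x y) = comp m (j x) (j y))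
    (hjim : ∀ y : C, π true k y = y ↔ ∃ x : Ck, j x = y)
    {Z : Type} [AddCommGroup Z] (πZ : Bool → ℕ → Z →+ Z) (δ : C → Z)
    (hfree : IsFreeInfGroup π comp πZ δ)
    {Zk : Type} [AddCommGroup Zk] (πZk : Bool → ℕ → Zk →+ Zk) (δk : Ck → Zk)
    (hfreek : IsFreeInfGroup πk compk πZk δk)
    (ι : Zk →+ Z)
    (hι1 : ∀ x : Ck, ι (δk x) = δ (j x)) :
    Function.Injective ι ∧ ∀ z : Z, (∃ w : Zk, ι w = z) ↔ πZ true k z = z := by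
  have hj_fixed : ∀ x, π true k (j x) = j x := fun x => (hjim _).mpr ⟨x, rfl⟩
  choose t ht using fun c => (hjim (π true k c)).mp (hcat.proj_proj_of_le c le_rfl)
  obtain ⟨P, hP⟩ := hfree.exists_lift hcat _
    (hfreek.respectsComp.comp_truncation hcat hjinj hjπ hjcomp ht)
  have hPι : P.comp ι = AddMonoidHom.id Zk := hfreek.hom_ext fun x => by
    simp only [AddMonoidHom.comp_apply, hι1, hP, AddMonoidHom.id_apply]
    rw [hjinj ((ht (j x)).trans (hj_fixed x))]
  have hπι : (πZ true k).comp ι = ι := hfreek.hom_ext fun x => by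
    simp only [AddMonoidHom.comp_apply, hι1, ← hfree.map_proj, hj_fixed]
  have hcomap_range : (ι.range).comap (πZ true k) = ⊤ := by
    rw [eq_top_iff, ← hfree.closure_range_eq_top, AddSubgroup.closure_le]
    rintro _ ⟨c, rfl⟩
    exact ⟨δk (t c), by rw [hι1, ht, hfree.map_proj]⟩
  refine ⟨Function.LeftInverse.injective (g := P) (DFunLike.congr_fun hPι), fun z => ⟨?_, ?_⟩⟩
  · rintro ⟨w, rfl⟩
    exact DFunLike.congr_fun hπι w
  · intro hz
    have hz_mem : z ∈ (ι.range).comap (πZ true k) := hcomap_range ▸ AddSubgroup.mem_top z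
    rwa [AddSubgroup.mem_comap, hz] at hz_mem

/-- Let `C_k → C` be the inclusion of the sub-∞-category of arrows of dimension at
most `k`.  Then the induced morphism `ℤ(C_k) → ℤC` of free strict ∞-groups is
injective, with image exactly `(ℤC)_k`, the subgroup of `k`-arrows of `ℤC`
(the image of `π_k^+`). -/
theorem free_inf_group_of_truncation
    {C Ck : Type} (π : Bool → ℕ → C → C) (comp : ℕ → C → C → C)
    (hcat : IsOmegaCat π comp)
    (πk : Bool → ℕ → Ck → Ck) (compk : ℕ → Ck → Ck → Ck)
    (hcatk : IsOmegaCat πk compk)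
    (k : ℕ) (j : Ck → C)
    (hjinj : Function.Injective j)
    (hjπ : ∀ (ε : Bool) (n : ℕ) (x : Ck), j (πk ε n x) = π ε n (j x))
    (hjcomp : ∀ (m : ℕ) (x y : Ck), πk true m x = πk false m y →
      j (compk m x y) = comp m (j x) (j y))
    (hjim : ∀ y : C, π true k y = y ↔ ∃ x : Ck, j x = y)
    {Z : Type} [AddCommGroup Z] (πZ : Bool → ℕ → Z →+ Z) (δ : C → Z)
    (hfree : IsFreeInfGroup π comp πZ δ)
    {Zk : Type} [AddCommGroup Zk] (πZk : Bool → ℕ → Zk →+ Zk) (δk : Ck → Zk)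
    (hfreek : IsFreeInfGroup πk compk πZk δk)
    (ι : Zk →+ Z)
    (hι1 : ∀ x : Ck, ι (δk x) = δ (j x))
    (hι2 : ∀ (ε : Bool) (n : ℕ) (z : Zk), ι (πZk ε n z) = πZ ε n (ι z)) :
    Function.Injective ι ∧ ∀ z : Z, (∃ w : Zk, ι w = z) ↔ πZ true k z = z :=
  free_inf_group_of_truncation_general π comp hcat πk compk k j hjinj hjπ hjcomp hjim πZ δ hfree πZk
    δk hfreek ι hι1
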